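/- arXiv:2411.18550 — 2 statements merged into one kernel-verified Lean document; each statement's English description precedes it below -/
import Mathlib

section
/- Let n ≥ 1, let w : ℝ → ℂ be measurable with ∫_ℝ |x|^m·|w(x)| dx < ∞ for every m ∈ ℕ. Suppose π₀, …, π_{n−1} are polynomials with complex coefficients such that deg π_j = j with nonzero leading coefficient ς_j, and ∫_ℝ π_j(x)·π_k(x)·w(x) dx = δ_{jk} for 0 ≤ j, k ≤ n−1. Then the Hankel-type multiple integral satisfies (1/n!) ∫_{ℝⁿ} ∏_{1≤j<k≤n} (x_k − x_j)² · ∏_{m=1}^{n} w(x_m) dx₁…dxₙ = ∏_{j=0}^{n−1} ς_j^{−2}. -/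
/-!
The Vandermonde product is `det (x_i ^ j)`, and since `π_j` has degree `j` and leading coefficient
`ς_j`, column operations turn it into `det (π_j (x_i)) / ∏ ς_j`. Expanding the square of this
determinant over pairs of permutations `(σ, τ)` and integrating coordinatewise (Fubini), every
term factors into integrals `∫ π_{σ i} π_{τ i} w`, which by orthonormality vanish unless `σ = τ`
and equal `1` otherwise; so the integral of `det (π_j (x_i)) ^ 2 ∏ w (x_i)` is `n!`.
-/

open MeasureTheory Finset Polynomial

theorem Finset.prod_filter_lt_eq_prod_prod_Ioi {M ι : Type*} [CommMonoid M] [Fintype ι]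
    [LinearOrder ι] [LocallyFiniteOrderTop ι] (f : ι → ι → M) :
    ∏ p ∈ univ.filter (fun p : ι × ι => p.1 < p.2), f p.1 p.2 = ∏ i, ∏ j ∈ Ioi i, f i j := by
  rw [prod_sigma']
  refine prod_nbij' (fun p => ⟨p.1, p.2⟩) (fun p => (p.1, p.2)) ?_ ?_ ?_ ?_ ?_ <;> simp

namespace Matrix

variable {R : Type*} [CommRing R] {n : ℕ}

theorem det_vandermonde_sq (v : Fin n → R) :
    (vandermonde v).det ^ 2 =
      ∏ p ∈ univ.filter (fun p : Fin n × Fin n => p.1 < p.2), (v p.2 - v p.1) ^ 2 := by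
  rw [prod_filter_lt_eq_prod_prod_Ioi (fun i j => (v j - v i) ^ 2), det_vandermonde]
  simp only [prod_pow]

theorem det_eval_matrixOfPolynomials_eq_det_vandermonde_mul (v : Fin n → R) (p : Fin n → R[X])
    (h_deg : ∀ i, (p i).natDegree = i) :
    (of fun i j => (p j).eval (v i)).det = (vandermonde v).det * ∏ i, (p i).leadingCoeff := by
  rw [eval_matrixOfPolynomials_eq_vandermonde_mul_matrixOfPolynomials v p (fun i => (h_deg i).le),
    det_mul,
    det_of_isUpperTriangular (matrixOfPolynomials_blockTriangular p fun i => (h_deg i).le)]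
  congr 1
  refine prod_congr rfl fun i _ => ?_
  rw [of_apply, ← h_deg i, coeff_natDegree]

theorem det_sq_mul_prod_eq_sum_perm {ι α : Type*} [Fintype ι] [DecidableEq ι]
    (f : ι → α → R) (w : α → R) (x : ι → α) :
    (of fun i j => f j (x i)).det ^ 2 * ∏ i, w (x i) =
      ∑ σ : Equiv.Perm ι, ∑ τ : Equiv.Perm ι,
        ((Equiv.Perm.sign σ : ℤ) * (Equiv.Perm.sign τ : ℤ) : R) *
          ∏ i, (f (σ i) (x i) * f (τ i) (x i) * w (x i)) := by
  rw [← det_transpose, det_apply', sq, sum_mul_sum, sum_mul]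
  refine sum_congr rfl fun σ _ => ?_
  rw [sum_mul]
  refine sum_congr rfl fun τ _ => ?_
  simp only [transpose_apply, of_apply, prod_mul_distrib]
  ring

end Matrix

theorem Polynomial.integrable_eval_mul {μ : Measure ℝ} {w : ℝ → ℂ}
    (hw : AEStronglyMeasurable w μ)
    (hmom : ∀ m : ℕ, Integrable (fun x => |x| ^ m * ‖w x‖) μ) (q : ℂ[X]) :
    Integrable (fun x : ℝ => q.eval (x : ℂ) * w x) μ := by
  refine Integrable.mono'
    (g := fun x => ∑ k ∈ range (q.natDegree + 1), ‖q.coeff k‖ * (|x| ^ k * ‖w x‖))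
    (integrable_finsetSum _ fun k _ => (hmom k).const_mul _)
    ((q.continuous.comp Complex.continuous_ofReal).aestronglyMeasurable.mul hw) ?_
  refine ae_of_all _ fun x => ?_
  calc ‖q.eval (x : ℂ) * w x‖
      ≤ (∑ k ∈ range (q.natDegree + 1), ‖q.coeff k‖ * |x| ^ k) * ‖w x‖ := by
        rw [norm_mul, eval_eq_sum_range]
        gcongr
        refine (norm_sum_le _ _).trans (sum_le_sum fun k _ => ?_)
        rw [norm_mul, norm_pow, Complex.norm_real, Real.norm_eq_abs]
    _ = _ := by simp only [sum_mul, mul_assoc]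

section Orthonormal

variable {ι α 𝕜 : Type*} [Fintype ι] [DecidableEq ι] [MeasurableSpace α] {μ : Measure α}
  [SigmaFinite μ] [RCLike 𝕜] {f : ι → α → 𝕜} {w : α → 𝕜}

theorem integral_prod_perm_of_orthonormal
    (horth : ∀ j k, ∫ t, f j t * f k t * w t ∂μ = if j = k then 1 else 0)
    (σ τ : Equiv.Perm ι) :
    ∫ x : ι → α, ∏ i, (f (σ i) (x i) * f (τ i) (x i) * w (x i)) ∂(Measure.pi fun _ => μ) =
      if σ = τ then 1 else 0 := by
  rw [integral_fintype_prod_eq_prod (fun i t => f (σ i) t * f (τ i) t * w t)]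
  split_ifs with h
  · simp [h, horth]
  · obtain ⟨i, hi⟩ : ∃ i, σ i ≠ τ i := by
      by_contra! hc
      exact h (Equiv.ext hc)
    exact prod_eq_zero (mem_univ i) (by rw [horth, if_neg hi])

theorem integral_det_sq_mul_prod_of_orthonormal
    (hint : ∀ j k, Integrable (fun t => f j t * f k t * w t) μ)
    (horth : ∀ j k, ∫ t, f j t * f k t * w t ∂μ = if j = k then 1 else 0) :
    ∫ x : ι → α, (Matrix.of fun i j => f j (x i)).det ^ 2 * ∏ i, w (x i)
        ∂(Measure.pi fun _ => μ) =
      (Fintype.card ι).factorial := by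
  have hint_prod (σ τ : Equiv.Perm ι) : Integrable
      (fun x : ι → α => ∏ i, (f (σ i) (x i) * f (τ i) (x i) * w (x i))) (Measure.pi fun _ => μ) :=
    Integrable.fintype_prod (f := fun i t => f (σ i) t * f (τ i) t * w t) fun i => hint _ _
  simp_rw [Matrix.det_sq_mul_prod_eq_sum_perm]
  rw [integral_finsetSum _ fun σ _ =>
    integrable_finsetSum _ fun τ _ => (hint_prod σ τ).const_mul _]
  simp_rw [integral_finsetSum _ fun τ _ => (hint_prod _ τ).const_mul _, integral_const_mul,
    integral_prod_perm_of_orthonormal horth, mul_ite, mul_one, mul_zero, sum_ite_eq, mem_univ,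
    if_true, ← Int.cast_mul, ← Units.val_mul, Int.units_mul_self]
  simp [Fintype.card_perm]

end Orthonormal

theorem hankel_integral_normalization_general (n : ℕ)
    (w : ℝ → ℂ) (hw : Measurable w)
    (hmom : ∀ m : ℕ, Integrable (fun x : ℝ => |x| ^ m * ‖w x‖))
    (P : Fin n → Polynomial ℂ)
    (hdeg : ∀ j : Fin n, (P j).natDegree = (j : ℕ))
    (hlead : ∀ j : Fin n, (P j).leadingCoeff ≠ 0)
    (horth : ∀ j k : Fin n,
      (∫ x : ℝ, (P j).eval (x : ℂ) * (P k).eval (x : ℂ) * w x)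
        = if j = k then 1 else 0) :
    (1 / (n.factorial : ℂ)) *
      (∫ x : Fin n → ℝ,
        ((∏ p ∈ Finset.univ.filter (fun p : Fin n × Fin n => p.1 < p.2),
            (x p.2 - x p.1) ^ 2 : ℝ) : ℂ)
          * ∏ m : Fin n, w (x m))
      = ∏ j : Fin n, ((P j).leadingCoeff ^ 2)⁻¹ := by
  have hlead_prod : ∏ j, (P j).leadingCoeff ≠ 0 := prod_ne_zero_iff.2 fun j _ => hlead j
  have hvandermonde (x : Fin n → ℝ) :
      ((∏ p ∈ univ.filter (fun p : Fin n × Fin n => p.1 < p.2), (x p.2 - x p.1) ^ 2 : ℝ) : ℂ) =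
        ((∏ j, (P j).leadingCoeff) ^ 2)⁻¹ *
          (Matrix.of fun i j => (P j).eval (x i : ℂ)).det ^ 2 := by
    rw [Matrix.det_eval_matrixOfPolynomials_eq_det_vandermonde_mul _ _ hdeg, mul_pow,
      Matrix.det_vandermonde_sq]
    push_cast
    field_simp
  have hint (j k : Fin n) :
      Integrable (fun t : ℝ => (P j).eval (t : ℂ) * (P k).eval (t : ℂ) * w t) := by
    simpa only [eval_mul] using (P j * P k).integrable_eval_mul hw.aestronglyMeasurable hmom
  simp_rw [hvandermonde, mul_assoc]
  rw [integral_const_mul, volume_pi, integral_det_sq_mul_prod_of_orthonormal hint horth,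
    Fintype.card_fin, prod_inv_distrib, prod_pow]
  field_simp [n.factorial_ne_zero]

/-- Normalization of the Hankel-type multiple integral: for a weight `w` with all
moments finite and orthonormal polynomials `π₀, …, π_{n-1}` (with `deg π_j = j` and
nonzero leading coefficients `ς_j`),
`(1/n!) ∫_{ℝⁿ} ∏_{j<k}(x_k - x_j)² ∏_m w(x_m) dx = ∏_j ς_j⁻²`. -/
theorem hankel_integral_normalization (n : ℕ) (hn : 1 ≤ n)
    (w : ℝ → ℂ) (hw : Measurable w)
    (hmom : ∀ m : ℕ, Integrable (fun x : ℝ => |x| ^ m * ‖w x‖))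
    (P : Fin n → Polynomial ℂ)
    (hdeg : ∀ j : Fin n, (P j).natDegree = (j : ℕ))
    (hlead : ∀ j : Fin n, (P j).leadingCoeff ≠ 0)
    (horth : ∀ j k : Fin n,
      (∫ x : ℝ, (P j).eval (x : ℂ) * (P k).eval (x : ℂ) * w x)
        = if j = k then 1 else 0) :
    (1 / (n.factorial : ℂ)) *
      (∫ x : Fin n → ℝ,
        ((∏ p ∈ Finset.univ.filter (fun p : Fin n × Fin n => p.1 < p.2),
            (x p.2 - x p.1) ^ 2 : ℝ) : ℂ)
          * ∏ m : Fin n, w (x m))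
      = ∏ j : Fin n, ((P j).leadingCoeff ^ 2)⁻¹ :=
  hankel_integral_normalization_general n w hw hmom P hdeg hlead horth
end

section
/- Let α > −1 and κ < √2 be real. With j and D as in the Szegő-function construction, define ν(z) := ( (z − √2)/(z − κ) )^{1/4} on ℂ \ [κ, √2] with the principal branch (so ν(z) → 1 as z → +∞), let χ := ( (√2 − κ)/4 )^{α/2}, and define the 2 × 2 matrix P(z) := diag(χ, χ^{−1}) · (1/2)·[[ν(z) + ν(z)^{−1}, −i(ν(z) − ν(z)^{−1})], [i(ν(z) − ν(z)^{−1}), ν(z) + ν(z)^{−1}]] · diag(D(z)^{−1}, D(z)) for z ∈ ℂ \ [κ, √2]. Then for every z ∈ (κ, √2) the one-sided limits P₊(z) := lim_{ε↓0} P(z + iε) and P₋(z) := lim_{ε↓0} P(z − iε) exist (entrywise) and satisfy the jump relation P₊(z) = P₋(z) · [[0, (√2 − z)^α], [−(√2 − z)^{−α}, 0]]. -/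
open Filter Topology Set

/-- The conformal map `j(w) = w + (w² - 1)^{1/2}` from `ℂ \ [-1, 1]` to the exterior
of the unit disk, with the branch of the square root (cut on `[-1, 1]`, realized as
`(w-1)^{1/2}(w+1)^{1/2}` with principal branches) for which `j(w) > 1` for real
`w > 1`. -/
noncomputable def jmap (w : ℂ) : ℂ :=
  w + (w - 1) ^ ((1 : ℂ) / 2) * (w + 1) ^ ((1 : ℂ) / 2)

/-- The Szegő function
`D(z) = ((z - √2)/j(1 + 2(z - √2)/(√2 - κ)))^{α/2}`, with the principal branch of
the power. -/
noncomputable def szego (α κ : ℝ) (z : ℂ) : ℂ :=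
  ((z - (Real.sqrt 2 : ℂ)) /
      jmap (1 + 2 * (z - (Real.sqrt 2 : ℂ)) / ((Real.sqrt 2 : ℂ) - (κ : ℂ))))
    ^ ((α : ℂ) / 2)

/-- The fourth root `ν(z) = ((z - √2)/(z - κ))^{1/4}`, with the principal branch
(so that `ν(z) → 1` as `z → +∞`). -/
noncomputable def nu (κ : ℝ) (z : ℂ) : ℂ :=
  ((z - (Real.sqrt 2 : ℂ)) / (z - (κ : ℂ))) ^ ((1 : ℂ) / 4)

/-- The constant `χ = ((√2 - κ)/4)^{α/2}`. -/
noncomputable def chi (α κ : ℝ) : ℝ := ((Real.sqrt 2 - κ) / 4) ^ (α / 2)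

/-- The outer parametrix
`P(z) = diag(χ, χ⁻¹) · (1/2)[[ν + ν⁻¹, -i(ν - ν⁻¹)], [i(ν - ν⁻¹), ν + ν⁻¹]]
  · diag(D(z)⁻¹, D(z))`. -/
noncomputable def Pmat (α κ : ℝ) (z : ℂ) : Matrix (Fin 2) (Fin 2) ℂ :=
  !![((chi α κ : ℝ) : ℂ), 0; 0, (((chi α κ : ℝ) : ℂ))⁻¹] *
    ((1 / 2 : ℂ) •
      !![nu κ z + (nu κ z)⁻¹, -Complex.I * (nu κ z - (nu κ z)⁻¹);
         Complex.I * (nu κ z - (nu κ z)⁻¹), nu κ z + (nu κ z)⁻¹]) *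
    !![(szego α κ z)⁻¹, 0; 0, szego α κ z]

/-! Every principal branch in `P` is continuous from the closed upper half-plane up to its cut,
so `P₊(z)` is `P` evaluated at the real point `z`. Off the real axis `ν` and `D` commute with
complex conjugation, so `P₋(z)` is `P₊(z)` with `ν(z)` and `D(z)` replaced by their conjugates.
On `(κ, √2)` the base of `ν` is negative, whence `ν₊ = i ν₋`, and `|j| = 1` on `[-1, 1]` gives
`|D₊| = (√2 - z)^{α/2}`, i.e. `D₊ D₋ = (√2 - z)^α`. Since replacing `ν` by `i ν` multiplies the
middle factor of `P` on the right by `[[0, 1], [-1, 0]]`, these two relations give the jump. -/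

open Complex ComplexConjugate Real

lemma Complex.continuousWithinAt_cpow_const_of_im_nonneg {x : ℂ} (hx : x ≠ 0) (c : ℂ) :
    ContinuousWithinAt (· ^ c) {u : ℂ | 0 ≤ u.im} x := by
  by_cases hslit : x ∈ slitPlane
  · exact (continuousAt_cpow_const hslit).continuousWithinAt
  rw [mem_slitPlane_iff, not_or, not_lt, not_not] at hslit
  obtain ⟨hre, him⟩ := hslit
  have hexp : ContinuousWithinAt (fun u => exp (log u * c)) {u : ℂ | 0 ≤ u.im} x :=
    continuous_exp.continuousAt.comp_continuousWithinAt
      ((continuousWithinAt_log_of_re_neg_of_im_zero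
        (hre.lt_of_ne fun h => hx (Complex.ext h him)) him).mul continuousWithinAt_const)
  refine hexp.congr_of_eventuallyEq ?_ (cpow_def_of_ne_zero hx c)
  filter_upwards [nhdsWithin_le_nhds (isOpen_ne.mem_nhds hx)] with u hu
  exact cpow_def_of_ne_zero hu c

lemma Complex.conj_cpow_of_conj_eq {x c : ℂ} (hx : x.arg ≠ π) (hc : conj c = c) :
    conj x ^ c = conj (x ^ c) := by
  rw [conj_cpow x c hx, hc]

lemma Complex.ofReal_cpow_eq_exp_mul_conj_of_neg {x : ℝ} (hx : x < 0) (y : ℝ) :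
    (x : ℂ) ^ (y : ℂ) = exp (2 * π * y * I) * conj ((x : ℂ) ^ (y : ℂ)) := by
  rw [ofReal_cpow_of_nonpos hx.le, ← ofReal_neg, ← ofReal_cpow (neg_nonneg.2 hx.le), map_mul,
    conj_ofReal, ← exp_conj, mul_left_comm, ← exp_add]
  simp only [map_mul, conj_ofReal, conj_I]
  ring_nf

lemma Complex.im_div_sub_ofReal (ζ : ℂ) (a b : ℝ) :
    ((ζ - a) / (ζ - b)).im = (a - b) * ζ.im / normSq (ζ - b) := by
  rw [div_im]
  simp only [sub_im, ofReal_im, sub_zero, sub_re, ofReal_re]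
  ring

lemma tendsto_ofReal_add_mul_I_nhdsWithin (x : ℝ) :
    Tendsto (fun ε : ℝ => (x : ℂ) + ε * I) (𝓝[>] 0) (𝓝[{u : ℂ | 0 < u.im}] x) := by
  refine tendsto_nhdsWithin_iff.2
    ⟨?_, eventually_nhdsWithin_of_forall fun ε hε => by simpa using hε⟩
  have h : Continuous fun ε : ℝ => (x : ℂ) + ε * I := by fun_prop
  simpa using (h.tendsto 0).mono_left nhdsWithin_le_nhds

noncomputable def outerMatrix (c ν D : ℂ) : Matrix (Fin 2) (Fin 2) ℂ :=
  !![c, 0; 0, c⁻¹] * ((1 / 2 : ℂ) • !![ν + ν⁻¹, -I * (ν - ν⁻¹); I * (ν - ν⁻¹), ν + ν⁻¹]) *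
    !![D⁻¹, 0; 0, D]

lemma Pmat_eq_outerMatrix (α κ : ℝ) (z : ℂ) :
    Pmat α κ z = outerMatrix (chi α κ : ℂ) (nu κ z) (szego α κ z) := rfl

lemma continuousAt_outerMatrix (c : ℂ) {ν D : ℂ} (hν : ν ≠ 0) (hD : D ≠ 0) :
    ContinuousAt (fun q : ℂ × ℂ => outerMatrix c q.1 q.2) (ν, D) := by
  have hinv₁ : ContinuousAt (fun q : ℂ × ℂ => q.1⁻¹) (ν, D) := continuousAt_fst.inv₀ hν
  have hinv₂ : ContinuousAt (fun q : ℂ × ℂ => q.2⁻¹) (ν, D) := continuousAt_snd.inv₀ hD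
  refine continuousAt_pi.2 fun i => continuousAt_pi.2 fun j => ?_
  fin_cases i <;> fin_cases j <;> simp [outerMatrix, Matrix.mul_apply, Fin.sum_univ_two] <;>
    fun_prop

lemma tendsto_outerMatrix {X : Type*} {l : Filter X} {f g : X → ℂ} {ν D : ℂ} (c : ℂ)
    (hf : Tendsto f l (𝓝 ν)) (hg : Tendsto g l (𝓝 D)) (hν : ν ≠ 0) (hD : D ≠ 0) :
    Tendsto (fun x => outerMatrix c (f x) (g x)) l (𝓝 (outerMatrix c ν D)) :=
  Tendsto.comp (f := fun x => (f x, g x)) (g := fun q : ℂ × ℂ => outerMatrix c q.1 q.2)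
    (continuousAt_outerMatrix c hν hD) (hf.prodMk_nhds hg)

lemma outerMatrix_jump {c ν₁ ν₂ D₁ D₂ ρ : ℂ} (hν : ν₁ = I * ν₂) (hD : D₁ * D₂ = ρ)
    (hν₂ : ν₂ ≠ 0) (hD₂ : D₂ ≠ 0) :
    outerMatrix c ν₁ D₁ = outerMatrix c ν₂ D₂ * !![0, ρ; -ρ⁻¹, 0] := by
  obtain rfl : D₁ = ρ * D₂⁻¹ := by rw [← hD, mul_inv_cancel_right₀ hD₂]
  subst hν
  ext i j
  fin_cases i <;> fin_cases j <;> simp [outerMatrix, Matrix.mul_apply, Fin.sum_univ_two] <;>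
    field_simp <;> ring_nf <;> rw [I_sq] <;> ring

lemma jmap_ofReal {w : ℝ} (h₁ : -1 ≤ w) (h₂ : w ≤ 1) : jmap w = w + √(1 - w ^ 2) * I := by
  have hminus : ((w : ℂ) - 1) ^ ((1 : ℂ) / 2) = √(1 - w) * I := by
    rw [show (w : ℂ) - 1 = ((w - 1 : ℝ) : ℂ) by push_cast; ring,
      ofReal_cpow_of_nonpos (by linarith), ← ofReal_neg,
      show ((1 : ℂ) / 2) = ((1 / 2 : ℝ) : ℂ) by push_cast; ring,
      ← ofReal_cpow (by linarith), ← Real.sqrt_eq_rpow, neg_sub,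
      show (π : ℂ) * I * ((1 / 2 : ℝ) : ℂ) = π / 2 * I by push_cast; ring, exp_pi_div_two_mul_I]
  have hplus : ((w : ℂ) + 1) ^ ((1 : ℂ) / 2) = √(w + 1) := by
    rw [show (w : ℂ) + 1 = ((w + 1 : ℝ) : ℂ) by push_cast; ring,
      show ((1 : ℂ) / 2) = ((1 / 2 : ℝ) : ℂ) by push_cast; ring,
      ← ofReal_cpow (by linarith), ← Real.sqrt_eq_rpow]
  rw [jmap, hminus, hplus, show 1 - w ^ 2 = (1 - w) * (w + 1) by ring,
    Real.sqrt_mul (by linarith)]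
  push_cast
  ring

lemma norm_jmap_ofReal {w : ℝ} (h₁ : -1 ≤ w) (h₂ : w ≤ 1) : ‖jmap w‖ = 1 := by
  have hsq : √(1 - w ^ 2) ^ 2 = 1 - w ^ 2 := Real.sq_sqrt (by nlinarith)
  rw [jmap_ofReal h₁ h₂, norm_def, normSq_add_mul_I, hsq]
  simp

lemma continuousWithinAt_jmap {w : ℂ} (h₁ : w ≠ 1) (h₂ : w ≠ -1) :
    ContinuousWithinAt jmap {u : ℂ | 0 ≤ u.im} w := by
  have hmaps (a : ℝ) : MapsTo (fun u : ℂ => u + a) {u | 0 ≤ u.im} {u | 0 ≤ u.im} :=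
    fun u hu => by simpa using hu
  have hroot (a : ℝ) (ha : w + a ≠ 0) :
      ContinuousWithinAt (fun u : ℂ => (u + a) ^ ((1 : ℂ) / 2)) {u | 0 ≤ u.im} w :=
    (continuousWithinAt_cpow_const_of_im_nonneg ha _).comp (f := fun u : ℂ => u + a)
      (by fun_prop) (hmaps a)
  have hm := hroot (-1) (by push_cast; exact sub_ne_zero.2 h₁)
  have hp := hroot 1 (by push_cast; exact fun h => h₂ (eq_neg_of_add_eq_zero_left h))
  push_cast at hm hp
  simp only [← sub_eq_add_neg] at hm
  exact continuousWithinAt_id.add (hm.mul hp)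

lemma jmap_conj {W : ℂ} (hW : W.im ≠ 0) : jmap (conj W) = conj (jmap W) := by
  have harg (a : ℝ) : (W + a).arg ≠ π := arg_eq_pi_iff.not.2 fun h => hW (by simpa using h.2)
  have hc : conj ((1 : ℂ) / 2) = 1 / 2 := by simp [map_ofNat]
  have hm := conj_cpow_of_conj_eq (harg (-1)) hc
  have hp := conj_cpow_of_conj_eq (harg 1) hc
  push_cast at hm hp
  simp only [← sub_eq_add_neg, map_sub, map_add, map_one] at hm hp
  simp only [jmap, map_add, map_mul, hm, hp]

section nu

variable {κ z : ℝ}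

lemma continuousWithinAt_nu (hz : z ∈ Ioo κ (√2)) :
    ContinuousWithinAt (nu κ) {u : ℂ | 0 ≤ u.im} z := by
  have hzκ : (z : ℂ) - κ ≠ 0 := sub_ne_zero.2 (ofReal_injective.ne hz.1.ne')
  have hbase : ContinuousAt (fun ζ : ℂ => (ζ - √2) / (ζ - κ)) z := by
    fun_prop (disch := exact hzκ)
  have hmaps : MapsTo (fun ζ : ℂ => (ζ - √2) / (ζ - κ)) {u | 0 ≤ u.im} {u | 0 ≤ u.im} :=
    fun ζ hζ => by
      rw [mem_ofPred_eq, im_div_sub_ofReal]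
      exact div_nonneg (mul_nonneg (by linarith [hz.1, hz.2]) hζ) (normSq_nonneg _)
  have hne : ((z : ℂ) - √2) / (z - κ) ≠ 0 :=
    div_ne_zero (sub_ne_zero.2 (ofReal_injective.ne hz.2.ne)) hzκ
  exact (continuousWithinAt_cpow_const_of_im_nonneg hne _).comp
    (f := fun ζ : ℂ => (ζ - √2) / (ζ - κ)) hbase.continuousWithinAt hmaps

lemma nu_conj (hκ : κ < √2) {ζ : ℂ} (hζ : 0 < ζ.im) : nu κ (conj ζ) = conj (nu κ ζ) := by
  have him : 0 < ((ζ - √2) / (ζ - κ)).im := by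
    rw [im_div_sub_ofReal]
    have : ζ - κ ≠ 0 := fun h => by simpa [sub_eq_zero.1 h] using hζ.ne'
    exact div_pos (mul_pos (by linarith) hζ) (normSq_pos.2 this)
  have hc : conj ((1 : ℂ) / 4) = 1 / 4 := by simp [map_ofNat]
  simpa [nu] using conj_cpow_of_conj_eq (arg_eq_pi_iff.not.2 fun h => him.ne' h.2) hc

lemma nu_ofReal_eq_I_mul_conj (hz : z ∈ Ioo κ (√2)) : nu κ z = I * conj (nu κ z) := by
  have hx : (z - √2) / (z - κ) < 0 :=
    div_neg_of_neg_of_pos (by linarith [hz.2]) (by linarith [hz.1])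
  have h := ofReal_cpow_eq_exp_mul_conj_of_neg hx (1 / 4)
  have hexp : exp (2 * π * ((1 / 4 : ℝ) : ℂ) * I) = I := by
    rw [show 2 * π * ((1 / 4 : ℝ) : ℂ) * I = π / 2 * I by push_cast; ring, exp_pi_div_two_mul_I]
  rw [hexp] at h
  simpa [nu] using h

lemma nu_ofReal_ne_zero (hz : z ∈ Ioo κ (√2)) : nu κ z ≠ 0 := by
  refine cpow_ne_zero_iff.2 (Or.inl (div_ne_zero ?_ ?_)) <;> rw [sub_ne_zero] <;> norm_cast
  exacts [hz.2.ne, hz.1.ne']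

end nu

noncomputable def rescale (κ : ℝ) (ζ : ℂ) : ℂ := 1 + 2 * (ζ - √2) / (√2 - κ)

noncomputable def szegoBase (κ : ℝ) (ζ : ℂ) : ℂ := (ζ - √2) / jmap (rescale κ ζ)

lemma szego_eq_szegoBase_cpow (α κ : ℝ) (ζ : ℂ) :
    szego α κ ζ = szegoBase κ ζ ^ ((α : ℂ) / 2) := rfl

lemma im_rescale (κ : ℝ) (ζ : ℂ) : (rescale κ ζ).im = 2 * ζ.im / (√2 - κ) := by
  rw [rescale, ← ofReal_sub, add_im, one_im, zero_add, div_ofReal_im]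
  simp

lemma rescale_conj (κ : ℝ) (ζ : ℂ) : rescale κ (conj ζ) = conj (rescale κ ζ) := by
  simp [rescale, map_ofNat]

section szego

variable {κ z : ℝ}

lemma exists_rescale_ofReal_eq (hz : z ∈ Ioo κ (√2)) :
    ∃ w : ℝ, w ∈ Ioo (-1) 1 ∧ rescale κ z = w := by
  obtain ⟨h₁, h₂⟩ := hz
  have hκ : 0 < √2 - κ := by linarith
  refine ⟨1 + 2 * (z - √2) / (√2 - κ), ⟨?_, ?_⟩, by rw [rescale]; push_cast; rfl⟩
  · rw [← sub_lt_iff_lt_add', lt_div_iff₀ hκ]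
    linarith
  · linarith [div_neg_of_neg_of_pos (by linarith : 2 * (z - √2) < 0) hκ]

lemma norm_szegoBase_ofReal (hz : z ∈ Ioo κ (√2)) : ‖szegoBase κ z‖ = √2 - z := by
  obtain ⟨w, ⟨hw₁, hw₂⟩, hR⟩ := exists_rescale_ofReal_eq hz
  rw [szegoBase, hR, norm_div, norm_jmap_ofReal hw₁.le hw₂.le, div_one, ← ofReal_sub,
    norm_real, Real.norm_of_nonpos (by linarith [hz.2]), neg_sub]

lemma szegoBase_ofReal_im_pos (hz : z ∈ Ioo κ (√2)) : 0 < (szegoBase κ z).im := by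
  obtain ⟨w, ⟨hw₁, hw₂⟩, hR⟩ := exists_rescale_ofReal_eq hz
  have hnormSq : normSq (jmap w) = 1 := by
    rw [normSq_eq_norm_sq, norm_jmap_ofReal hw₁.le hw₂.le, one_pow]
  have him : (jmap w).im = √(1 - w ^ 2) := by simp [jmap_ofReal hw₁.le hw₂.le]
  have hs : 0 < √(1 - w ^ 2) := Real.sqrt_pos.2 (by nlinarith)
  rw [szegoBase, hR, div_im, hnormSq, him]
  simp only [← ofReal_sub, ofReal_im, ofReal_re]
  nlinarith [hz.2]

lemma continuousWithinAt_szegoBase (hz : z ∈ Ioo κ (√2)) :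
    ContinuousWithinAt (szegoBase κ) {u : ℂ | 0 ≤ u.im} z := by
  obtain ⟨w, ⟨hw₁, hw₂⟩, hR⟩ := exists_rescale_ofReal_eq hz
  have hmaps : MapsTo (rescale κ) {u | 0 ≤ u.im} {u | 0 ≤ u.im} := fun ζ (hζ : 0 ≤ ζ.im) => by
    rw [mem_ofPred_eq, im_rescale]
    exact div_nonneg (mul_nonneg two_pos.le hζ) (by linarith [hz.1, hz.2])
  have hj : ContinuousWithinAt (fun ζ => jmap (rescale κ ζ)) {u | 0 ≤ u.im} z := by
    refine (continuousWithinAt_jmap ?_ ?_).comp (f := rescale κ) (by unfold rescale; fun_prop)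
      hmaps <;> rw [hR]
    · exact_mod_cast hw₂.ne
    · exact_mod_cast hw₁.ne'
  have hj0 : jmap (rescale κ z) ≠ 0 := by
    rw [hR, ← norm_ne_zero_iff, norm_jmap_ofReal hw₁.le hw₂.le]
    exact one_ne_zero
  exact (continuousWithinAt_id.sub continuousWithinAt_const).div hj hj0

lemma szegoBase_conj (hκ : κ < √2) {ζ : ℂ} (hζ : 0 < ζ.im) :
    szegoBase κ (conj ζ) = conj (szegoBase κ ζ) := by
  have him : (rescale κ ζ).im ≠ 0 := by
    rw [im_rescale]
    exact (div_pos (mul_pos two_pos hζ) (sub_pos.2 hκ)).ne'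
  rw [szegoBase, szegoBase, rescale_conj, jmap_conj him, map_div₀, map_sub, conj_ofReal]

lemma continuousWithinAt_szego (α : ℝ) (hz : z ∈ Ioo κ (√2)) :
    ContinuousWithinAt (szego α κ) {u : ℂ | 0 ≤ u.im} z :=
  (continuousAt_cpow_const (Or.inr (szegoBase_ofReal_im_pos hz).ne')).comp_continuousWithinAt
    (continuousWithinAt_szegoBase hz)

lemma szego_ofReal_ne_zero (α : ℝ) (hz : z ∈ Ioo κ (√2)) : szego α κ z ≠ 0 := by
  rw [szego_eq_szegoBase_cpow, cpow_ne_zero_iff]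
  exact Or.inl fun h => (szegoBase_ofReal_im_pos hz).ne' (by rw [h, zero_im])

lemma szego_mul_conj (α : ℝ) (hz : z ∈ Ioo κ (√2)) :
    szego α κ z * conj (szego α κ z) = ((√2 - z) ^ α : ℝ) := by
  rw [mul_conj, normSq_eq_norm_sq, szego_eq_szegoBase_cpow,
    show (α : ℂ) / 2 = ((α / 2 : ℝ) : ℂ) by push_cast; ring, norm_cpow_real,
    norm_szegoBase_ofReal hz, ← Real.rpow_natCast, ← Real.rpow_mul (by linarith [hz.2])]
  norm_num

lemma eventually_szego_conj (α : ℝ) (hz : z ∈ Ioo κ (√2)) :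
    ∀ᶠ ζ in 𝓝[{u : ℂ | 0 < u.im}] (z : ℂ), szego α κ (conj ζ) = conj (szego α κ ζ) := by
  have hslit : ∀ᶠ ζ in 𝓝[{u : ℂ | 0 < u.im}] (z : ℂ), szegoBase κ ζ ∈ slitPlane :=
    ((continuousWithinAt_szegoBase hz).mono fun u (hu : 0 < u.im) => hu.le).eventually_mem
      (isOpen_slitPlane.mem_nhds (Or.inr (szegoBase_ofReal_im_pos hz).ne'))
  filter_upwards [hslit, self_mem_nhdsWithin] with ζ hζslit hζ
  rw [szego_eq_szegoBase_cpow, szego_eq_szegoBase_cpow, szegoBase_conj (hz.1.trans hz.2) hζ]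
  exact conj_cpow_of_conj_eq (slitPlane_arg_ne_pi hζslit) (by simp [map_ofNat])

end szego

section Pmat

variable {κ z : ℝ}

lemma continuousWithinAt_Pmat (α : ℝ) (hz : z ∈ Ioo κ (√2)) :
    ContinuousWithinAt (Pmat α κ) {u : ℂ | 0 ≤ u.im} z :=
  tendsto_outerMatrix (chi α κ : ℂ) (continuousWithinAt_nu hz).tendsto
    (continuousWithinAt_szego α hz).tendsto (nu_ofReal_ne_zero hz) (szego_ofReal_ne_zero α hz)

lemma tendsto_Pmat_conj (α : ℝ) (hz : z ∈ Ioo κ (√2)) :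
    Tendsto (fun ζ => Pmat α κ (conj ζ)) (𝓝[{u : ℂ | 0 < u.im}] z)
      (𝓝 (outerMatrix (chi α κ : ℂ) (conj (nu κ z)) (conj (szego α κ z)))) := by
  have hupper : 𝓝[{u : ℂ | 0 < u.im}] (z : ℂ) ≤ 𝓝[{u : ℂ | 0 ≤ u.im}] (z : ℂ) :=
    nhdsWithin_mono _ fun u (hu : 0 < u.im) => hu.le
  have hν := (continuous_conj.tendsto _).comp
    ((continuousWithinAt_nu hz).tendsto.mono_left hupper)
  have hD := (continuous_conj.tendsto _).comp
    ((continuousWithinAt_szego α hz).tendsto.mono_left hupper)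
  refine (tendsto_outerMatrix (chi α κ : ℂ) hν hD ((map_ne_zero conj).2 (nu_ofReal_ne_zero hz))
    ((map_ne_zero conj).2 (szego_ofReal_ne_zero α hz))).congr' ?_
  filter_upwards [eventually_szego_conj α hz, self_mem_nhdsWithin] with ζ hDζ hζ
  rw [Pmat_eq_outerMatrix, nu_conj (hz.1.trans hz.2) hζ, hDζ]
  rfl

end Pmat

theorem outer_parametrix_jump_general (α κ : ℝ) :
    ∀ z : ℝ, z ∈ Ioo κ (Real.sqrt 2) →
      ∃ Pp Pm : Matrix (Fin 2) (Fin 2) ℂ,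
        (∀ i j : Fin 2,
          Tendsto (fun ε : ℝ => Pmat α κ ((z : ℂ) + (ε : ℂ) * Complex.I) i j)
            (𝓝[>] 0) (𝓝 (Pp i j))) ∧
        (∀ i j : Fin 2,
          Tendsto (fun ε : ℝ => Pmat α κ ((z : ℂ) - (ε : ℂ) * Complex.I) i j)
            (𝓝[>] 0) (𝓝 (Pm i j))) ∧
        Pp = Pm *
          !![0, (((Real.sqrt 2 - z) ^ α : ℝ) : ℂ);
             -(((Real.sqrt 2 - z) ^ (-α) : ℝ) : ℂ), 0] := by
  intro z hz
  have hpath := tendsto_ofReal_add_mul_I_nhdsWithin z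
  have hupper : Tendsto (fun ε : ℝ => Pmat α κ (z + ε * I)) (𝓝[>] 0) (𝓝 (Pmat α κ z)) :=
    ((continuousWithinAt_Pmat α hz).mono fun u (hu : 0 < u.im) => hu.le).tendsto.comp hpath
  have hlower : Tendsto (fun ε : ℝ => Pmat α κ (z - ε * I)) (𝓝[>] 0)
      (𝓝 (outerMatrix (chi α κ : ℂ) (conj (nu κ z)) (conj (szego α κ z)))) := by
    convert (tendsto_Pmat_conj α hz).comp hpath using 2 with ε
    simp [sub_eq_add_neg]
  refine ⟨_, _, fun i j => tendsto_pi_nhds.1 (tendsto_pi_nhds.1 hupper i) j,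
    fun i j => tendsto_pi_nhds.1 (tendsto_pi_nhds.1 hlower i) j, ?_⟩
  rw [Real.rpow_neg (by linarith [hz.2]), ofReal_inv]
  exact outerMatrix_jump (nu_ofReal_eq_I_mul_conj hz) (szego_mul_conj α hz)
    ((map_ne_zero conj).2 (nu_ofReal_ne_zero hz)) ((map_ne_zero conj).2 (szego_ofReal_ne_zero α hz))

/-- Jump relation of the outer parametrix on `(κ, √2)`: the one-sided entrywise
limits `P₊(z)` and `P₋(z)` exist and satisfy
`P₊(z) = P₋(z) · [[0, (√2 - z)^α], [-(√2 - z)^{-α}, 0]]`. -/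
theorem outer_parametrix_jump (α κ : ℝ) (hα : -1 < α) (hκ : κ < Real.sqrt 2) :
    ∀ z : ℝ, z ∈ Ioo κ (Real.sqrt 2) →
      ∃ Pp Pm : Matrix (Fin 2) (Fin 2) ℂ,
        (∀ i j : Fin 2,
          Tendsto (fun ε : ℝ => Pmat α κ ((z : ℂ) + (ε : ℂ) * Complex.I) i j)
            (𝓝[>] 0) (𝓝 (Pp i j))) ∧
        (∀ i j : Fin 2,
          Tendsto (fun ε : ℝ => Pmat α κ ((z : ℂ) - (ε : ℂ) * Complex.I) i j)
            (𝓝[>] 0) (𝓝 (Pm i j))) ∧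
        Pp = Pm *
          !![0, (((Real.sqrt 2 - z) ^ α : ℝ) : ℂ);
             -(((Real.sqrt 2 - z) ^ (-α) : ℝ) : ℂ), 0] :=
  outer_parametrix_jump_general α κ
end
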